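/- There is an absolute constant c > 0 such that the following holds. Let d+ > d− > 0 satisfy d+ − d− ≥ c√(d+ ln d+) with d+ bounded below by a sufficiently large absolute constant, let G be a locally finite graph with σ : V(G) → {±1}, let C be the core, and let v be a vertex such that G_v is a finite tree. (1) If u ∈ C_v \ {v} with h_{u→v} ≥ 1 and μ*_{u→v} = 0, then cut(G_{u→v}, σ^{+1}_{u→v}) = cut(G_{u→v}, σ^{−1}_{u→v}). (2) If μ*_v = 0, then cut(G_v, σ^{+1}_v) = cut(G_v, σ^{−1}_v). -/

import Mathlib

open Filter Topology

attribute [local instance] Classical.propDecidable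

set_option linter.unusedVariables false

noncomputable section


/-! ### Basic functions -/

/-- The clamping function `ψ` restricted to the integers. -/
def psiZ (x : ℤ) : ℤ := max (-1) (min 1 x)

/-- The threshold function `ψ̃` restricted to the integers. -/
def tpsiZ (x : ℤ) : ℤ := if x ≤ -1 then -1 else 1

/-- `p : ℤ → ℝ` represents a probability measure on `{-1, 0, 1}`. -/
def IsProbOn3 (p : ℤ → ℝ) : Prop :=
  (∀ z, 0 ≤ p z) ∧ (∀ z : ℤ, z ∉ ({-1, 0, 1} : Set ℤ) → p z = 0) ∧ p (-1) + p 0 + p 1 = 1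

/-- `p` is skewed: `p(1) ≥ 1 - d₊⁻¹⁰`. -/
def Skewed (dp : ℝ) (p : ℤ → ℝ) : Prop := 1 - (dp ^ 10)⁻¹ ≤ p 1

/-- The point mass at `1`, i.e. `(0,0,1)`. -/
def delta1 : ℤ → ℝ := fun z => if z = 1 then 1 else 0

/-! ### The operator `T` -/

/-- Convolution of two mass functions on `ℤ`. -/
def convZ (a b : ℤ → ℝ) : ℤ → ℝ := fun z => ∑' w : ℤ, a w * b (z - w)

/-- `n`-fold convolution power (distribution of a sum of `n` i.i.d. copies). -/
def convPow (a : ℤ → ℝ) : ℕ → ℤ → ℝ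
  | 0 => fun z => if z = 0 then 1 else 0
  | n + 1 => convZ (convPow a n) a

/-- Poisson mass function with mean `d`. -/
def poisP (d : ℝ) (k : ℕ) : ℝ := Real.exp (-d) * d ^ k / (Nat.factorial k)

/-- Distribution of `-η` when `η` has distribution `a`. -/
def flipM (a : ℤ → ℝ) : ℤ → ℝ := fun z => a (-z)

/-- The distribution of `Z_p = ∑_{i=1}^{γ₊} η_i - ∑_{i=γ₊+1}^{γ₊+γ₋} η_i` where the `η_i`
are i.i.d. with distribution `p` and `γ₊ ~ Po(d₊)`, `γ₋ ~ Po(d₋)` are independent. -/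
def Zdist (dp dm : ℝ) (p : ℤ → ℝ) : ℤ → ℝ := fun z =>
  ∑' k : ℕ, ∑' l : ℕ, poisP dp k * poisP dm l * convZ (convPow p k) (convPow (flipM p) l) z

/-- The operator `𝒯 = 𝒯_{d₊,d₋}`: the distribution of `ψ(Z_p)`. -/
def Twp (dp dm : ℝ) (p : ℤ → ℝ) : ℤ → ℝ := fun z =>
  if z = 1 then ∑' m : ℕ, Zdist dp dm p (1 + (m : ℤ))
  else if z = 0 then Zdist dp dm p 0
  else if z = -1 then ∑' m : ℕ, Zdist dp dm p (-1 - (m : ℤ))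
  else 0

/-- The value `Z` as a function of the outcomes `η : Fin (k+l) → ℤ`, where the first `k`
coordinates form the `γ₊`-group and the remaining `l` the `γ₋`-group. -/
def zsum (k l : ℕ) (η : Fin (k + l) → ℤ) : ℤ :=
  (∑ j ∈ Finset.univ.filter (fun j : Fin (k + l) => (j : ℕ) < k), η j)
    - ∑ j ∈ Finset.univ.filter (fun j : Fin (k + l) => k ≤ (j : ℕ)), η j

/-- Conditional expectation of
`∑_{i=1}^{γ₊} 1{η_i = -ψ̃(Z)} + ∑_{i=γ₊+1}^{γ₊+γ₋} 1{η_i = ψ̃(Z)}` given `γ₊ = k, γ₋ = l`. -/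
def innerPhi (p : ℤ → ℝ) (k l : ℕ) : ℝ :=
  ∑ η ∈ Fintype.piFinset (fun _ : Fin (k + l) => ({-1, 0, 1} : Finset ℤ)),
    (∏ i, p (η i)) *
      (((Finset.univ.filter (fun i : Fin (k + l) =>
            (i : ℕ) < k ∧ η i = - tpsiZ (zsum k l η))).card : ℝ)
        + ((Finset.univ.filter (fun i : Fin (k + l) =>
            k ≤ (i : ℕ) ∧ η i = tpsiZ (zsum k l η))).card : ℝ))

/-- The functional `φ_{d₊,d₋}`. -/
def phiOp (dp dm : ℝ) (p : ℤ → ℝ) : ℝ :=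
  (1 / 2) * ∑' k : ℕ, ∑' l : ℕ, poisP dp k * poisP dm l * innerPhi p k l

/-! ### The L¹-Wasserstein distance on measures on `{-1,0,1}` -/

/-- `ℓ₁(p,q)`: infimum of `E |X - Y|` over couplings of `p` and `q`. -/
def ell1 (p q : ℤ → ℝ) : ℝ :=
  sInf { r | ∃ ν : ℤ × ℤ → ℝ, (∀ x y, 0 ≤ ν (x, y)) ∧
    (∀ x, ∑ y ∈ ({-1, 0, 1} : Finset ℤ), ν (x, y) = p x) ∧
    (∀ y, ∑ x ∈ ({-1, 0, 1} : Finset ℤ), ν (x, y) = q y) ∧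
    r = ∑ x ∈ ({-1, 0, 1} : Finset ℤ), ∑ y ∈ ({-1, 0, 1} : Finset ℤ),
          |(x : ℝ) - (y : ℝ)| * ν (x, y) }





/-! ### Graphs: restriction, cuts, the core, Warning Propagation -/

/-- Every neighbourhood in a graph on a finite vertex type is finite. -/
noncomputable instance fintypeNeighborSet {V : Type*} [Fintype V] (G : SimpleGraph V) (v : V) :
    Fintype (G.neighborSet v) := Fintype.ofFinite _

/-- The subgraph of `G` consisting of the edges inside `S` (the induced subgraph on `S`,
viewed as a graph on the ambient vertex set; vertices outside `S` are isolated). -/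
def restrictG {V : Type*} (G : SimpleGraph V) (S : Set V) : SimpleGraph V where
  Adj x y := G.Adj x y ∧ x ∈ S ∧ y ∈ S
  symm := ⟨fun x y h => ⟨G.adj_symm h.1, h.2.2, h.2.1⟩⟩
  loopless := ⟨fun x h => G.irrefl h.1⟩

/-- `cut(G, σ)` for the boundary condition `σ` on `U`: the least number of edges of `G` joining
vertices of different colours, over all `±1`-colourings `τ` agreeing with `σ` on `U`.
(The set of ordered pairs of adjacent bichromatic vertices has twice the size of the
corresponding edge set.) -/
def cutW {V : Type*} (G : SimpleGraph V) (U : Set V) (σ : V → ℤ) : ℕ :=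
  sInf { k | ∃ τ : V → ℤ, (∀ x, τ x = 1 ∨ τ x = -1) ∧ (∀ x ∈ U, τ x = σ x) ∧
    2 * k = {p : V × V | G.Adj p.1 p.2 ∧ τ p.1 ≠ τ p.2}.ncard }

/-- The defining property of the core. -/
def CoreProp {V : Type*} (G : SimpleGraph V) (σ : V → ℤ) (dp dm c : ℝ) (U : Set V) : Prop :=
  ∀ u ∈ U,
    |(({w | G.Adj u w ∧ σ u * σ w = 1}.ncard : ℝ) - dp)| ≤ c / 4 * Real.sqrt (dp * Real.log dp) ∧
    |(({w | G.Adj u w ∧ σ u * σ w = -1}.ncard : ℝ) - dm)| ≤ c / 4 * Real.sqrt (dp * Real.log dp) ∧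
    ({w | G.Adj u w} \ U).ncard ≤ 100

/-- The core: the largest subset satisfying `CoreProp`, i.e. the union of all such subsets. -/
def coreSet {V : Type*} (G : SimpleGraph V) (σ : V → ℤ) (dp dm c : ℝ) : Set V :=
  ⋃₀ { U | CoreProp G σ dp dm c U }

/-- The sets `C_v^{(t)}`. -/
def CvStage {V : Type*} (G : SimpleGraph V) (K : Set V) (v : V) : ℕ → Set V
  | 0 => {v} ∪ {w | G.Adj v w}
  | t + 1 => CvStage G K v t ∪ ⋃ u ∈ (CvStage G K v t \ K), {w | G.Adj u w}

/-- The set `C_v = ⋃_t C_v^{(t)}`. -/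
def CvSet {V : Type*} (G : SimpleGraph V) (K : Set V) (v : V) : Set V :=
  ⋃ t, CvStage G K v t

/-- Warning Propagation messages `μ_{v→w}(t | G, σ)` with initial condition `σ` on `U`. -/
def wpMsg {V : Type*} (G : SimpleGraph V) [∀ v : V, Fintype (G.neighborSet v)]
    (U : Set V) (σ : V → ℤ) : ℕ → V → V → ℤ
  | 0, v, _ => if v ∈ U then σ v else 0
  | t + 1, v, w => psiZ (∑ u ∈ (G.neighborFinset v).erase w, wpMsg G U σ t u v)

/-- `μ_v(t|G,σ) = ∑_{w ∈ ∂v} μ_{w→v}(t|G,σ)`. -/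
def wpVal {V : Type*} (G : SimpleGraph V) [∀ v : V, Fintype (G.neighborSet v)]
    (U : Set V) (σ : V → ℤ) (t : ℕ) (v : V) : ℤ :=
  ∑ w ∈ G.neighborFinset v, wpMsg G U σ t w v

/-- The maximum distance from `w` to any vertex reachable from `w` in `G`. -/
def hgt {V : Type*} (G : SimpleGraph V) (w : V) : ℕ :=
  sSup ((G.dist w) '' { u | G.Reachable w u })

/-- `G_v`: the subgraph of `G` induced on `C_v` (ambient form). -/
def GvG {V : Type*} (G : SimpleGraph V) (K : Set V) (v : V) : SimpleGraph V :=
  restrictG G (CvSet G K v)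

/-- `w_{↑v}`: the neighbour of `w` on the path from `w` to `v` in `G_v`. -/
def parentOf {V : Type*} (G : SimpleGraph V) (K : Set V) (v w : V) : V :=
  @Classical.epsilon V ⟨v⟩ fun x =>
    (GvG G K v).Adj w x ∧ (GvG G K v).dist x v + 1 = (GvG G K v).dist w v

/-- `G_v` with the edge `{w, w_{↑v}}` removed. -/
def GdelG {V : Type*} (G : SimpleGraph V) (K : Set V) (v w : V) : SimpleGraph V :=
  (GvG G K v).deleteEdges {s(w, parentOf G K v w)}

/-- `h_{w→v}`: the maximum distance between `w` and any other vertex of `G_{w→v}`. -/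
def hdir {V : Type*} (G : SimpleGraph V) (K : Set V) (v w : V) : ℕ :=
  hgt (GdelG G K v w) w

/-- `C_{w→v}`: the vertex set of the component of `w` in `G_v` minus the edge `{w, w_{↑v}}`. -/
def Cdir {V : Type*} (G : SimpleGraph V) (K : Set V) (v w : V) : Set V :=
  { u | (GdelG G K v w).Reachable w u }

/-- `G_{w→v}`: the component of `w` in `G_v` minus the edge `{w, w_{↑v}}`. -/
def Gdir {V : Type*} (G : SimpleGraph V) (K : Set V) (v w : V) : SimpleGraph V :=
  restrictG (GdelG G K v w) (Cdir G K v w)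

/-- `h_v`: the maximum distance between `v` and any other vertex of `G_v`. -/
def hvG {V : Type*} (G : SimpleGraph V) (K : Set V) (v : V) : ℕ :=
  hgt (GvG G K v) v

/-- `μ*_{w→v} = μ_{w→w_{↑v}}(h_{w→v}+1 | G, σ)`. -/
def muStarDir {V : Type*} (G : SimpleGraph V) [∀ v : V, Fintype (G.neighborSet v)]
    (K : Set V) (σ : V → ℤ) (v w : V) : ℤ :=
  wpMsg G Set.univ σ (hdir G K v w + 1) w (parentOf G K v w)

/-- `μ*_v = μ_v(h_v+1 | G, σ)`. -/
def muStarV {V : Type*} (G : SimpleGraph V) [∀ v : V, Fintype (G.neighborSet v)]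
    (K : Set V) (σ : V → ℤ) (v : V) : ℤ :=
  wpVal G Set.univ σ (hvG G K v + 1) v

/-- The ball of radius `t` around `v` in `G`. -/
def ballSet {V : Type*} (G : SimpleGraph V) (v : V) (t : ℕ) : Set V :=
  { u | G.Reachable v u ∧ G.dist v u ≤ t }

lemma mem_ballSet_self {V : Type*} (G : SimpleGraph V) (v : V) (t : ℕ) : v ∈ ballSet G v t :=
  ⟨SimpleGraph.Reachable.refl v, by simp [SimpleGraph.dist_self]⟩

/-- `∂^t(G,r,σ) ≅ ∂^t(H,r',τ)`: a root- and label-preserving isomorphism between the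
balls of radius `t`. -/
def RootedBallIso {V W : Type*} (G : SimpleGraph V) (σ : V → ℤ) (r : V)
    (H : SimpleGraph W) (τ : W → ℤ) (r' : W) (t : ℕ) : Prop :=
  ∃ φ : (G.induce (ballSet G r t)) ≃g (H.induce (ballSet H r' t)),
    φ ⟨r, mem_ballSet_self G r t⟩ = ⟨r', mem_ballSet_self H r' t⟩ ∧
    ∀ x, τ (φ x).1 = σ x.1





/-! ### The planted bisection model -/

/-- `σ` is a balanced bipartition: the two class sizes differ by at most one. -/
def BalancedPart {n : ℕ} (σ : Fin n → Bool) : Prop :=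
  (((Finset.univ.filter (fun v => σ v = true)).card : ℤ)
    - ((Finset.univ.filter (fun v => σ v = false)).card : ℤ)).natAbs ≤ 1

/-- The number of balanced bipartitions of `Fin n`. -/
def Nbal (n : ℕ) : ℕ := (Finset.univ.filter (fun σ : Fin n → Bool => BalancedPart σ)).card

/-- The probability `p_{σ(v)σ(w)}` of the edge `{v,w}`, where `p₊ = 2d₊/n`, `p₋ = 2d₋/n`. -/
def pairProb (dp dm : ℝ) (n : ℕ) (σ : Fin n → Bool) (v w : Fin n) : ℝ :=
  if σ v = σ w then 2 * dp / n else 2 * dm / n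

/-- The probability mass of an outcome `ω = (σ, g)` of the planted bisection model
`G(n, 2d₊/n, 2d₋/n)`: `σ` is a uniformly random balanced bipartition and, independently
for each pair `v ≠ w`, the edge `{v,w}` is present with probability `p_{σ(v)σ(w)}`. -/
def pbMass (dp dm : ℝ) (n : ℕ) (ω : (Fin n → Bool) × (Fin n → Fin n → Bool)) : ℝ :=
  (if BalancedPart ω.1 ∧ (∀ v w, ω.2 v w = ω.2 w v) ∧ (∀ v, ω.2 v v = false)
    then ((Nbal n : ℝ))⁻¹ else 0) *
  ∏ p ∈ Finset.univ.filter (fun p : Fin n × Fin n => p.1 < p.2),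
    (if ω.2 p.1 p.2 = true then pairProb dp dm n ω.1 p.1 p.2
      else 1 - pairProb dp dm n ω.1 p.1 p.2)

/-- The probability of an event in the planted bisection model. -/
def pbPr (dp dm : ℝ) (n : ℕ) (A : (Fin n → Bool) × (Fin n → Fin n → Bool) → Prop) : ℝ :=
  ∑ ω ∈ Finset.univ.filter A, pbMass dp dm n ω

/-- Sign of a Boolean, as `±1`. -/
def sgnB (b : Bool) : ℤ := if b then 1 else -1

/-- The planted assignment `σ : [n] → {±1}` of an outcome. -/
def pbSigma {n : ℕ} (ω : (Fin n → Bool) × (Fin n → Fin n → Bool)) : Fin n → ℤ :=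
  fun v => sgnB (ω.1 v)

/-- The graph of an outcome. -/
def pbGraph (n : ℕ) (g : Fin n → Fin n → Bool) : SimpleGraph (Fin n) :=
  SimpleGraph.fromRel fun v w => g v w = true

/-- The minimum bisection width `bis(G)`: the least number of edges joining `S` and its
complement over all `S` with `||S| - |S̄|| ≤ 1`. -/
def bisWidth {n : ℕ} (G : SimpleGraph (Fin n)) : ℕ :=
  sInf { k | ∃ S : Finset (Fin n),
    ((S.card : ℤ) - ((n : ℤ) - (S.card : ℤ))).natAbs ≤ 1 ∧
    k = {p : Fin n × Fin n | G.Adj p.1 p.2 ∧ p.1 ∈ S ∧ p.2 ∉ S}.ncard }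

/-! ### Finite rooted typed trees and the two-type Galton–Watson tree -/

/-- Finite rooted trees whose vertices carry a type in `ℤ` (used with types `±1`). -/
inductive GWT : Type
  | node : ℤ → List GWT → GWT

instance : Inhabited GWT := ⟨.node 0 []⟩

/-- The type of the root. -/
def GWT.typeOf : GWT → ℤ
  | .node s _ => s

/-- The subtrees pending on the children of the root. -/
def GWT.childrenOf : GWT → List GWT
  | .node _ l => l

/-- Valid positions (vertices) of a tree, encoded as lists of child indices. -/
def GWT.valid : GWT → List ℕ → Prop
  | _, [] => True
  | T, i :: p => i < T.childrenOf.length ∧ GWT.valid (T.childrenOf.getD i default) p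

/-- The type of the vertex at position `q`. -/
def GWT.typeAt : GWT → List ℕ → ℤ
  | T, [] => T.typeOf
  | T, i :: p => GWT.typeAt (T.childrenOf.getD i default) p

/-- The tree as a simple graph on its set of positions. -/
def GWT.graph (T : GWT) : SimpleGraph { p : List ℕ // T.valid p } where
  Adj a b := (∃ i : ℕ, (b : List ℕ) = (a : List ℕ) ++ [i]) ∨
             (∃ i : ℕ, (a : List ℕ) = (b : List ℕ) ++ [i])
  symm := ⟨fun a b h => h.symm⟩
  loopless := ⟨fun a h => by
    rcases h with ⟨i, hi⟩ | ⟨i, hi⟩ <;>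
      · have := congrArg List.length hi
        simp at this⟩

/-- The root of the tree. -/
def GWT.root (T : GWT) : { p : List ℕ // T.valid p } := ⟨[], trivial⟩

/-- The type labelling of the vertices. -/
def GWT.lab (T : GWT) : { p : List ℕ // T.valid p } → ℤ := fun q => T.typeAt q.1

/-- The Warning Propagation message `μ_{r↑}(t)` sent by the root of a tree towards its
(imaginary) parent, when the messages are initialised with the types. -/
def GWT.rootMsg : ℕ → GWT → ℤ
  | 0, T => T.typeOf
  | t + 1, T => psiZ ((T.childrenOf.map (GWT.rootMsg t)).sum)

/-- The probability mass function of the depth-`t` truncation of the two-type Galton–Watson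
tree with root type `s`, realised as a random *ordered* tree: the root spawns `Po(d₊ + d₋)`
children, each independently of type `s` with probability `d₊/(d₊+d₋)` and of type `-s`
with probability `d₋/(d₊+d₋)`, and the subtrees pending on the children are independent
Galton–Watson trees truncated at depth `t-1`. -/
def ogwMass (dp dm : ℝ) : ℕ → ℤ → GWT → ℝ
  | 0, s, T => if T.typeOf = s ∧ T.childrenOf = [] then 1 else 0
  | t + 1, s, T =>
    if T.typeOf = s then
      Real.exp (-(dp + dm)) / (Nat.factorial T.childrenOf.length) *
        (T.childrenOf.map fun U => (if U.typeOf = s then dp else dm)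
          * ogwMass dp dm t U.typeOf U).prod
    else 0


end

/-!
Core vertices send their own sign in every round, since their core neighbours of the same sign
outnumber all their other neighbours by more than one. On the finite tree `G_v`, the cut
problem on the branch below a vertex `w` splits at `w` into independent problems on the
branches below its children `x`, each joined to `w` by one edge. For
`Δ(w) = cut(w ↦ -1) - cut(w ↦ +1)` this gives `Δ(w) = ∑ₓ ψ(Δ(x))`, with `σ(x)` in place of
`ψ(Δ(x))` for children in the core, which is exactly the Warning Propagation update. By
induction on the height, the message from `w` to its parent is `ψ(Δ(w))` once WP has run
longer than the branch is high, so `μ* = 0` forces `Δ = 0`.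
-/

open Finset

lemma psiZ_eq_zero {x : ℤ} : psiZ x = 0 ↔ x = 0 := by unfold psiZ; omega

lemma psiZ_mem_Icc (x : ℤ) : psiZ x ∈ Set.Icc (-1) 1 := by unfold psiZ; constructor <;> omega

lemma psiZ_eq_one {x : ℤ} (h : 1 ≤ x) : psiZ x = 1 := by unfold psiZ; omega

lemma psiZ_eq_neg_one {x : ℤ} (h : x ≤ -1) : psiZ x = -1 := by unfold psiZ; omega

namespace SimpleGraph

lemma finsetSup_adj {V ι : Type*} {X : Finset ι} {H : ι → SimpleGraph V} {a b : V} :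
    (X.sup H).Adj a b ↔ ∃ i ∈ X, (H i).Adj a b := by
  simp [Finset.sup_eq_iSup, iSup_adj]

section RestrictG

variable {V : Type*} {G : SimpleGraph V} {S : Set V}

lemma mem_of_restrictG_walk {a b : V} (p : (restrictG G S).Walk a b) (ha : a ∈ S) : b ∈ S := by
  induction p with
  | nil => exact ha
  | cons h _ ih => exact ih h.2.2

def restrictGHom (G : SimpleGraph V) (S : Set V) : G.induce S →g restrictG G S where
  toFun := Subtype.val
  map_rel' h := ⟨h, Subtype.prop _, Subtype.prop _⟩

lemma exists_map_eq_of_restrictG_walk {a b : V} (p : (restrictG G S).Walk a b) (ha : a ∈ S)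
    (hb : b ∈ S) : ∃ q : (G.induce S).Walk ⟨a, ha⟩ ⟨b, hb⟩, q.map (restrictGHom G S) = p := by
  induction p with
  | nil => exact ⟨Walk.nil, rfl⟩
  | cons h p ih =>
    obtain ⟨q, rfl⟩ := ih h.2.2 hb
    exact ⟨Walk.cons (show (G.induce S).Adj ⟨_, ha⟩ ⟨_, h.2.2⟩ from h.1) q, rfl⟩

lemma IsTree.reachable_restrictG (htree : (G.induce S).IsTree) {a b : V} (ha : a ∈ S)
    (hb : b ∈ S) : (restrictG G S).Reachable a b :=
  (htree.connected.preconnected ⟨a, ha⟩ ⟨b, hb⟩).map (restrictGHom G S)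

lemma IsTree.isAcyclic_restrictG (htree : (G.induce S).IsTree) : (restrictG G S).IsAcyclic := by
  intro a c hc
  cases c with
  | nil => exact hc.not_nil Walk.Nil.nil
  | cons h p =>
    obtain ⟨q, hq⟩ := exists_map_eq_of_restrictG_walk (Walk.cons h p) h.2.1 h.2.1
    exact htree.isAcyclic q
      ((Walk.isCycle_map_iff_of_injective (f := restrictGHom G S) Subtype.val_injective).mp
        (hq ▸ hc))

end RestrictG

section Geodesic

variable {V : Type*} {T : SimpleGraph V}

lemma dist_lt_of_mem_support_of_length_eq_dist {b u w : V} (R : T.Walk b u)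
    (hlen : R.length = T.dist b u) (hw : w ∈ R.support) (hwb : w ≠ b) :
    T.dist w u < T.dist b u := by
  have h1 : T.dist w u ≤ (R.dropUntil w hw).length := dist_le _
  have h2 : (R.takeUntil w hw).length + (R.dropUntil w hw).length = R.length := by
    rw [← Walk.length_append, Walk.take_spec]
  have h3 : (R.takeUntil w hw).length ≠ 0 := fun h0 => hwb (Walk.eq_of_length_eq_zero h0).symm
  omega

lemma isPath_cons_of_dist_le {w b u : V} (hb : T.Adj w b) (hd : T.dist b u ≤ T.dist w u)
    {P : T.Walk b u} (hP : P.IsPath) (hlen : P.length = T.dist b u) : (Walk.cons hb P).IsPath :=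
  (Walk.cons_isPath_iff hb P).mpr
    ⟨hP, fun hw => by have := dist_lt_of_mem_support_of_length_eq_dist P hlen hw hb.ne; omega⟩

end Geodesic

end SimpleGraph

section Cut

variable {V ι : Type*}

def IsSignExtension (U : Set V) (σ τ : V → ℤ) : Prop :=
  (∀ x, τ x = 1 ∨ τ x = -1) ∧ ∀ x ∈ U, τ x = σ x

noncomputable def pairCount (F : Finset V) (H : SimpleGraph V) (τ : V → ℤ) : ℕ :=
  #{p ∈ F ×ˢ F | H.Adj p.1 p.2 ∧ τ p.1 ≠ τ p.2}

lemma pairCount_eq_two_mul (F : Finset V) (H : SimpleGraph V) (τ : V → ℤ) :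
    pairCount F H τ = 2 * #{p ∈ F ×ˢ F | H.Adj p.1 p.2 ∧ τ p.1 < τ p.2} := by
  have hsplit : {p ∈ F ×ˢ F | H.Adj p.1 p.2 ∧ τ p.1 ≠ τ p.2}
      = {p ∈ F ×ˢ F | H.Adj p.1 p.2 ∧ τ p.1 < τ p.2}
        ∪ {p ∈ F ×ˢ F | H.Adj p.1 p.2 ∧ τ p.2 < τ p.1} := by
    rw [← Finset.filter_or]
    exact Finset.filter_congr fun p _ => by rw [ne_iff_lt_or_gt, and_or_left]
  have hswap : #{p ∈ F ×ˢ F | H.Adj p.1 p.2 ∧ τ p.2 < τ p.1}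
      = #{p ∈ F ×ˢ F | H.Adj p.1 p.2 ∧ τ p.1 < τ p.2} :=
    Finset.card_nbij' Prod.swap Prod.swap
      (fun p hp => by simp_all [H.adj_comm]) (fun p hp => by simp_all [H.adj_comm])
      (fun p _ => rfl) (fun p _ => rfl)
  rw [pairCount, hsplit, Finset.card_union_of_disjoint
    (Finset.disjoint_filter.mpr fun p _ h h' => lt_asymm h.2 h'.2), hswap, two_mul]

variable {F : Finset V} {H H₁ H₂ : SimpleGraph V} {U : Set V} {σ τ : V → ℤ}

lemma ncard_eq_pairCount (hF : ∀ a b, H.Adj a b → a ∈ F ∧ b ∈ F) (τ : V → ℤ) :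
    {p : V × V | H.Adj p.1 p.2 ∧ τ p.1 ≠ τ p.2}.ncard = pairCount F H τ := by
  rw [pairCount, ← Set.ncard_coe_finset]
  congr 1
  ext p
  simpa using fun h _ => hF _ _ h

lemma two_mul_cutW_le_pairCount (hF : ∀ a b, H.Adj a b → a ∈ F ∧ b ∈ F)
    (hτ : IsSignExtension U σ τ) : 2 * cutW H U σ ≤ pairCount F H τ := by
  rw [pairCount_eq_two_mul]
  exact Nat.mul_le_mul_left 2 <| Nat.sInf_le
    ⟨τ, hτ.1, hτ.2, by rw [ncard_eq_pairCount hF, pairCount_eq_two_mul]⟩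

lemma exists_two_mul_cutW_eq_pairCount (hF : ∀ a b, H.Adj a b → a ∈ F ∧ b ∈ F)
    (hτ : IsSignExtension U σ τ) :
    ∃ τ', IsSignExtension U σ τ' ∧ 2 * cutW H U σ = pairCount F H τ' := by
  obtain ⟨τ', h₁, h₂, h₃⟩ := Nat.sInf_mem (s := { k | ∃ τ : V → ℤ, (∀ x, τ x = 1 ∨ τ x = -1) ∧
      (∀ x ∈ U, τ x = σ x) ∧ 2 * k = {p : V × V | H.Adj p.1 p.2 ∧ τ p.1 ≠ τ p.2}.ncard })
    ⟨_, τ, hτ.1, hτ.2, by rw [ncard_eq_pairCount hF, pairCount_eq_two_mul]⟩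
  exact ⟨τ', ⟨h₁, h₂⟩, by rw [cutW, h₃, ncard_eq_pairCount hF]⟩

lemma pairCount_congr {S : Set V} (hS : ∀ a b, H.Adj a b → a ∈ S ∧ b ∈ S)
    {τ' : V → ℤ} (h : ∀ a ∈ S, τ a = τ' a) : pairCount F H τ = pairCount F H τ' := by
  unfold pairCount
  congr 1
  refine Finset.filter_congr fun p _ => and_congr_right fun hp => ?_
  rw [h _ (hS _ _ hp).1, h _ (hS _ _ hp).2]

lemma pairCount_sup (h : ∀ a b, H₁.Adj a b → ¬ H₂.Adj a b) :
    pairCount F (H₁ ⊔ H₂) τ = pairCount F H₁ τ + pairCount F H₂ τ := by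
  unfold pairCount
  rw [← Finset.card_union_of_disjoint
    (Finset.disjoint_filter.mpr fun p _ h₁ h₂ => h _ _ h₁.1 h₂.1)]
  congr 1
  ext p
  simp only [Finset.mem_filter, Finset.mem_union, SimpleGraph.sup_adj]
  tauto

lemma pairCount_finsetSup {X : Finset ι} {Hs : ι → SimpleGraph V}
    (h : ∀ i ∈ X, ∀ j ∈ X, i ≠ j → ∀ a b, (Hs i).Adj a b → ¬ (Hs j).Adj a b) :
    pairCount F (X.sup Hs) τ = ∑ i ∈ X, pairCount F (Hs i) τ := by
  unfold pairCount
  rw [← Finset.card_biUnion fun i hi j hj hij => Finset.disjoint_filter.mpr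
    fun p _ h₁ h₂ => h i hi j hj hij _ _ h₁.1 h₂.1]
  congr 1
  ext p
  simp only [Finset.mem_filter, Finset.mem_biUnion, SimpleGraph.finsetSup_adj]
  aesop

lemma pairCount_edge {w x : V} (hw : w ∈ F) (hx : x ∈ F) (hwx : w ≠ x) :
    pairCount F (SimpleGraph.edge w x) τ = if τ w = τ x then 0 else 2 := by
  unfold pairCount
  split_ifs with h
  · simp only [Finset.card_eq_zero, Finset.filter_eq_empty_iff, SimpleGraph.edge_adj]
    rintro ⟨a, b⟩ - ⟨⟨⟨rfl, rfl⟩ | ⟨rfl, rfl⟩, -⟩, hab⟩ <;> simp_all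
  · rw [Finset.card_eq_two]
    refine ⟨(w, x), (x, w), by simp [hwx], ?_⟩
    ext ⟨a, b⟩
    simp only [Finset.mem_filter, Finset.mem_product, SimpleGraph.edge_adj, Finset.mem_insert,
      Finset.mem_singleton, Prod.mk.injEq]
    constructor
    · rintro ⟨-, h', -⟩; tauto
    · rintro (⟨rfl, rfl⟩ | ⟨rfl, rfl⟩) <;> simp_all [eq_comm, Ne.symm hwx]

end Cut

section StarSplit

variable {V : Type*}

def mismatch (z y : ℤ) : ℕ := if z = y then 0 else 1

noncomputable def rootedCut (H : SimpleGraph V) (C K : Set V) (σ : V → ℤ) (x : V) (y : ℤ) : ℕ :=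
  cutW H (C ∩ ({x} ∪ K)) (fun a => if a = x then y else σ a)

/-- The cost of the branch `(H, C)` below `x` together with the edge from `x` to a neighbour
coloured `z`. -/
noncomputable def branchCost (H : SimpleGraph V) (C K : Set V) (σ : V → ℤ) (x : V) (z : ℤ) :
    ℕ :=
  if x ∈ K then rootedCut H C K σ x (σ x) + mismatch z (σ x)
  else min (rootedCut H C K σ x 1 + mismatch z 1) (rootedCut H C K σ x (-1) + mismatch z (-1))

noncomputable def cutBias (H : SimpleGraph V) (C K : Set V) (σ : V → ℤ) (x : V) : ℤ :=
  rootedCut H C K σ x (-1) - rootedCut H C K σ x 1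

lemma rootedCut_eq_of_cutBias_eq_zero {H : SimpleGraph V} {C K : Set V} {σ : V → ℤ} {x : V}
    (h : cutBias H C K σ x = 0) : rootedCut H C K σ x 1 = rootedCut H C K σ x (-1) := by
  unfold cutBias at h
  omega

lemma branchCost_neg_one_sub_branchCost_one {H : SimpleGraph V} {C K : Set V} {σ : V → ℤ}
    {x : V} (hσx : σ x = 1 ∨ σ x = -1) :
    (branchCost H C K σ x (-1) : ℤ) - branchCost H C K σ x 1
      = if x ∈ K then σ x else psiZ (cutBias H C K σ x) := by
  unfold branchCost cutBias psiZ
  by_cases hxK : x ∈ K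
  · rcases hσx with h | h <;> simp [hxK, h, mismatch]
  · simp only [hxK, if_false, mismatch]
    norm_num
    omega

variable {F : Finset V} {H : SimpleGraph V} {C K : Set V} {σ τ : V → ℤ} {x : V}

lemma two_mul_branchCost_le (hF : ∀ a ∈ C, a ∈ F) (hH : ∀ a b, H.Adj a b → a ∈ C ∧ b ∈ C)
    (hx : x ∈ C) (hτ : IsSignExtension (C ∩ K) σ τ) (z : ℤ) :
    2 * branchCost H C K σ x z ≤ pairCount F H τ + 2 * mismatch z (τ x) := by
  have hroot : 2 * rootedCut H C K σ x (τ x) ≤ pairCount F H τ := by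
    refine two_mul_cutW_le_pairCount (fun a b h => ⟨hF _ (hH a b h).1, hF _ (hH a b h).2⟩)
      ⟨hτ.1, fun a ⟨ha, ha'⟩ => ?_⟩
    by_cases hax : a = x
    · simp [hax]
    · simpa [hax] using hτ.2 a ⟨ha, ha'.resolve_left hax⟩
  have hbranch : branchCost H C K σ x z ≤ rootedCut H C K σ x (τ x) + mismatch z (τ x) := by
    unfold branchCost
    split_ifs with hxK
    · rw [hτ.2 x ⟨hx, hxK⟩]
    · rcases hτ.1 x with h | h <;> rw [h] <;> simp
  omega

lemma exists_pairCount_add_eq_two_mul_branchCost (hF : ∀ a ∈ C, a ∈ F)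
    (hH : ∀ a b, H.Adj a b → a ∈ C ∧ b ∈ C) (hx : x ∈ C) (hσ : ∀ a, σ a = 1 ∨ σ a = -1)
    (z : ℤ) : ∃ τ, IsSignExtension (C ∩ K) σ τ ∧
      pairCount F H τ + 2 * mismatch z (τ x) = 2 * branchCost H C K σ x z := by
  obtain ⟨y, hy, hyK, hcost⟩ : ∃ y : ℤ, (y = 1 ∨ y = -1) ∧ (x ∈ K → y = σ x) ∧
      branchCost H C K σ x z = rootedCut H C K σ x y + mismatch z y := by
    unfold branchCost
    split_ifs with hxK
    · exact ⟨σ x, hσ x, fun _ => rfl, rfl⟩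
    · rcases min_choice (rootedCut H C K σ x 1 + mismatch z 1)
        (rootedCut H C K σ x (-1) + mismatch z (-1)) with h | h
      · exact ⟨1, Or.inl rfl, fun h' => absurd h' hxK, h⟩
      · exact ⟨-1, Or.inr rfl, fun h' => absurd h' hxK, h⟩
  obtain ⟨τ, ⟨hτ, hτU⟩, hτcut⟩ := exists_two_mul_cutW_eq_pairCount
    (fun a b h => ⟨hF _ (hH a b h).1, hF _ (hH a b h).2⟩)
    (τ := fun a => if a = x then y else σ a) (U := C ∩ ({x} ∪ K))
    ⟨fun a => by dsimp only; split_ifs <;> simp [hy, hσ a], fun _ _ => rfl⟩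
  have hτx : τ x = y := by simpa using hτU x ⟨hx, Or.inl rfl⟩
  refine ⟨τ, ⟨hτ, fun a ⟨ha, haK⟩ => ?_⟩, ?_⟩
  · by_cases hax : a = x
    · subst hax; rw [hτx, hyK haK]
    · simpa [hax] using hτU a ⟨ha, Or.inr haK⟩
  · rw [← hτcut, hcost, hτx, rootedCut]
    ring

structure IsStarSplit (H : SimpleGraph V) (C : Set V) (w : V) (X : Finset V)
    (Hs : V → SimpleGraph V) (Cs : V → Set V) : Prop where
  eq_sup : H = X.sup fun x => SimpleGraph.edge w x ⊔ Hs x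
  mem_iff : ∀ a, a ∈ C ↔ a = w ∨ ∃ x ∈ X, a ∈ Cs x
  self_mem : ∀ x ∈ X, x ∈ Cs x
  center_not_mem : ∀ x ∈ X, w ∉ Cs x
  disjoint : ∀ x ∈ X, ∀ x' ∈ X, x ≠ x' → ∀ a ∈ Cs x, a ∉ Cs x'
  adj_mem : ∀ x ∈ X, ∀ a b, (Hs x).Adj a b → a ∈ Cs x ∧ b ∈ Cs x

namespace IsStarSplit

variable {w : V} {X : Finset V} {Hs : V → SimpleGraph V} {Cs : V → Set V}

lemma subset (hS : IsStarSplit H C w X Hs Cs) {x : V} (hx : x ∈ X) : Cs x ⊆ C :=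
  fun a ha => (hS.mem_iff a).mpr (Or.inr ⟨x, hx, ha⟩)

lemma ne_center (hS : IsStarSplit H C w X Hs Cs) {x a : V} (hx : x ∈ X) (ha : a ∈ Cs x) :
    a ≠ w := fun h => hS.center_not_mem x hx (h ▸ ha)

lemma mem_of_adj (hS : IsStarSplit H C w X Hs Cs) {a b : V} (h : H.Adj a b) : a ∈ C ∧ b ∈ C := by
  rw [hS.eq_sup, SimpleGraph.finsetSup_adj] at h
  obtain ⟨x, hx, h⟩ := h
  rcases (SimpleGraph.sup_adj _ _ _ _).mp h with h | h
  · have hw := (hS.mem_iff w).mpr (Or.inl rfl)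
    have hxC := hS.subset hx (hS.self_mem x hx)
    rcases ((SimpleGraph.edge_adj ..).mp h).1 with ⟨rfl, rfl⟩ | ⟨rfl, rfl⟩
    exacts [⟨hw, hxC⟩, ⟨hxC, hw⟩]
  · exact ⟨hS.subset hx (hS.adj_mem x hx a b h).1, hS.subset hx (hS.adj_mem x hx a b h).2⟩

lemma pairCount_eq (hS : IsStarSplit H C w X Hs Cs) (hF : ∀ a ∈ C, a ∈ F) :
    pairCount F H τ = ∑ x ∈ X, (pairCount F (Hs x) τ + 2 * mismatch (τ w) (τ x)) := by
  have hedge : ∀ x ∈ X, ∀ a b, (SimpleGraph.edge w x).Adj a b →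
      (a = w ∧ b = x ∨ a = x ∧ b = w) := fun x _ a b h => ((SimpleGraph.edge_adj ..).mp h).1
  rw [hS.eq_sup, pairCount_finsetSup]
  · refine Finset.sum_congr rfl fun x hx => ?_
    have hw := hF w ((hS.mem_iff w).mpr (Or.inl rfl))
    rw [pairCount_sup, pairCount_edge hw (hF x (hS.subset hx (hS.self_mem x hx)))
      (hS.ne_center hx (hS.self_mem x hx)).symm, add_comm]
    · unfold mismatch; split_ifs <;> rfl
    · intro a b h h'
      have := hS.adj_mem x hx a b h'
      rcases hedge x hx a b h with ⟨rfl, -⟩ | ⟨-, rfl⟩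
      exacts [hS.center_not_mem x hx this.1, hS.center_not_mem x hx this.2]
  · intro x hx x' hx' hne a b h h'
    simp only [SimpleGraph.sup_adj] at h h'
    rcases h with h | h <;> rcases h' with h' | h'
    · rcases hedge x hx a b h with ⟨rfl, rfl⟩ | ⟨rfl, rfl⟩ <;>
        rcases hedge x' hx' _ _ h' with ⟨h₁, h₂⟩ | ⟨h₁, h₂⟩
      exacts [hne h₂, h.ne h₂.symm, h.ne h₁, hne h₁]
    · have := hS.adj_mem x' hx' a b h'
      rcases hedge x hx a b h with ⟨rfl, -⟩ | ⟨-, rfl⟩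
      exacts [hS.center_not_mem x' hx' this.1, hS.center_not_mem x' hx' this.2]
    · have := hS.adj_mem x hx a b h
      rcases hedge x' hx' a b h' with ⟨rfl, -⟩ | ⟨-, rfl⟩
      exacts [hS.center_not_mem x hx this.1, hS.center_not_mem x hx this.2]
    · exact hS.disjoint x hx x' hx' hne a (hS.adj_mem x hx a b h).1 (hS.adj_mem x' hx' a b h').1

variable {z : ℤ}

lemma two_mul_sum_branchCost_le (hS : IsStarSplit H C w X Hs Cs) (hF : ∀ a ∈ C, a ∈ F)
    (hτ : IsSignExtension (C ∩ ({w} ∪ K)) (fun a => if a = w then z else σ a) τ) :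
    2 * ∑ x ∈ X, branchCost (Hs x) (Cs x) K σ x z ≤ pairCount F H τ := by
  have hτw : τ w = z := by simpa using hτ.2 w ⟨(hS.mem_iff w).mpr (Or.inl rfl), Or.inl rfl⟩
  rw [hS.pairCount_eq hF, hτw, Finset.mul_sum]
  refine Finset.sum_le_sum fun x hx => two_mul_branchCost_le (fun a ha => hF a (hS.subset hx ha))
    (hS.adj_mem x hx) (hS.self_mem x hx) ⟨hτ.1, fun a ⟨ha, haK⟩ => ?_⟩ z
  simpa [hS.ne_center hx ha] using hτ.2 a ⟨hS.subset hx ha, Or.inr haK⟩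

lemma exists_pairCount_eq_two_mul_sum_branchCost (hS : IsStarSplit H C w X Hs Cs)
    (hF : ∀ a ∈ C, a ∈ F) (hσ : ∀ a, σ a = 1 ∨ σ a = -1) (hz : z = 1 ∨ z = -1) :
    ∃ τ, IsSignExtension (C ∩ ({w} ∪ K)) (fun a => if a = w then z else σ a) τ ∧
      pairCount F H τ = 2 * ∑ x ∈ X, branchCost (Hs x) (Cs x) K σ x z := by
  have hopt : ∀ x ∈ X, ∃ τ', IsSignExtension (Cs x ∩ K) σ τ' ∧
      pairCount F (Hs x) τ' + 2 * mismatch z (τ' x) = 2 * branchCost (Hs x) (Cs x) K σ x z :=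
    fun x hx => exists_pairCount_add_eq_two_mul_branchCost (fun a ha => hF a (hS.subset hx ha))
      (hS.adj_mem x hx) (hS.self_mem x hx) hσ z
  choose! τs hτs hτcost using hopt
  -- the branches are disjoint, so their optimal colourings glue together
  let τ : V → ℤ := fun a =>
    if a = w then z else if h : ∃ x ∈ X, a ∈ Cs x then τs h.choose a else σ a
  have hτ_of_mem : ∀ x ∈ X, ∀ a ∈ Cs x, τ a = τs x a := by
    intro x hx a ha
    have h : ∃ x ∈ X, a ∈ Cs x := ⟨x, hx, ha⟩
    have hchoose : h.choose = x := by
      by_contra hne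
      exact hS.disjoint _ h.choose_spec.1 x hx hne a h.choose_spec.2 ha
    simp only [τ, if_neg (hS.ne_center hx ha), dif_pos h, hchoose]
  refine ⟨τ, ⟨fun a => ?_, fun a ⟨ha, haU⟩ => ?_⟩, ?_⟩
  · simp only [τ]
    split_ifs with h h'
    exacts [hz, (hτs _ h'.choose_spec.1).1 a, hσ a]
  · by_cases haw : a = w
    · simp [τ, haw]
    · obtain ⟨x, hx, hax⟩ := ((hS.mem_iff a).mp ha).resolve_left haw
      rw [hτ_of_mem x hx a hax, (hτs x hx).2 a ⟨hax, haU.resolve_left haw⟩]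
      simp [haw]
  · rw [hS.pairCount_eq hF, Finset.mul_sum]
    refine Finset.sum_congr rfl fun x hx => ?_
    rw [← hτcost x hx, pairCount_congr (hS.adj_mem x hx) (hτ_of_mem x hx),
      hτ_of_mem x hx x (hS.self_mem x hx)]
    simp [τ]

lemma rootedCut_eq_sum_branchCost (hS : IsStarSplit H C w X Hs Cs) (hC : C.Finite)
    (hσ : ∀ a, σ a = 1 ∨ σ a = -1) (hz : z = 1 ∨ z = -1) :
    rootedCut H C K σ w z = ∑ x ∈ X, branchCost (Hs x) (Cs x) K σ x z := by
  have hF : ∀ a ∈ C, a ∈ hC.toFinset := fun a ha => hC.mem_toFinset.mpr ha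
  have hH : ∀ a b, H.Adj a b → a ∈ hC.toFinset ∧ b ∈ hC.toFinset :=
    fun a b h => ⟨hF a (hS.mem_of_adj h).1, hF b (hS.mem_of_adj h).2⟩
  obtain ⟨τ, hτ, hτcost⟩ := hS.exists_pairCount_eq_two_mul_sum_branchCost (K := K) hF hσ hz
  obtain ⟨τ', hτ', hτ'cost⟩ := exists_two_mul_cutW_eq_pairCount hH hτ
  have hle := two_mul_cutW_le_pairCount hH hτ
  have hge := hS.two_mul_sum_branchCost_le hF hτ'
  unfold rootedCut
  omega

lemma cutBias_eq_sum (hS : IsStarSplit H C w X Hs Cs) (hC : C.Finite)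
    (hσ : ∀ a, σ a = 1 ∨ σ a = -1) :
    cutBias H C K σ w
      = ∑ x ∈ X, if x ∈ K then σ x else psiZ (cutBias (Hs x) (Cs x) K σ x) := by
  rw [cutBias, hS.rootedCut_eq_sum_branchCost hC hσ (Or.inr rfl),
    hS.rootedCut_eq_sum_branchCost hC hσ (Or.inl rfl)]
  push_cast
  rw [← Finset.sum_sub_distrib]
  exact Finset.sum_congr rfl fun x _ => branchCost_neg_one_sub_branchCost_one (hσ x)

end IsStarSplit

end StarSplit

section Core

variable {V : Type*} {G : SimpleGraph V} [∀ w : V, Fintype (G.neighborSet w)] {σ : V → ℤ}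
  {dp dm : ℝ}

lemma thousand_le_sqrt_mul_log {d : ℝ} (hd : 1000000 ≤ d) : 1000 ≤ √(d * Real.log d) := by
  have hlog : 1 ≤ Real.log d := by
    rw [Real.le_log_iff_exp_le (by linarith)]
    linarith [Real.exp_one_lt_d9]
  rw [Real.le_sqrt' (by norm_num)]
  nlinarith

lemma CoreProp.card_neighborFinset_add_three_le {U : Set V} (hU : CoreProp G σ dp dm 1 U)
    {u : V} (hu : u ∈ U) (hσ : ∀ x, σ x = 1 ∨ σ x = -1) (hD : 1000000 ≤ dp)
    (hgap : 1 * √(dp * Real.log dp) ≤ dp - dm) :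
    #(G.neighborFinset u) + 3 ≤ 2 * #{x ∈ G.neighborFinset u | σ u * σ x = 1 ∧ x ∈ U} := by
  obtain ⟨hplus, hminus, hout⟩ := hU u hu
  set N := G.neighborFinset u
  have hA : {w | G.Adj u w ∧ σ u * σ w = 1}.ncard = #{x ∈ N | σ u * σ x = 1} := by
    rw [← Set.ncard_coe_finset]; congr 1; ext; simp [N]
  have hB : {w | G.Adj u w ∧ σ u * σ w = -1}.ncard = #{x ∈ N | ¬ σ u * σ x = 1} := by
    rw [← Set.ncard_coe_finset]; congr 1; ext x
    rcases hσ u with h | h <;> rcases hσ x with h' | h' <;> simp [N, h, h']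
  have hO : ({w | G.Adj u w} \ U).ncard = #{x ∈ N | x ∉ U} := by
    rw [← Set.ncard_coe_finset]; congr 1; ext; simp [N]
  rw [hA] at hplus
  rw [hB] at hminus
  rw [hO] at hout
  have hs := thousand_le_sqrt_mul_log hD
  have hAB : (500 : ℝ) ≤ #{x ∈ N | σ u * σ x = 1} - #{x ∈ N | ¬ σ u * σ x = 1} := by
    linarith [abs_le.mp hplus, abs_le.mp hminus]
  have hpart := Finset.card_filter_add_card_filter_not (s := N) (fun x => σ u * σ x = 1)
  have hcover : #{x ∈ N | σ u * σ x = 1}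
      ≤ #{x ∈ N | σ u * σ x = 1 ∧ x ∈ U} + #{x ∈ N | x ∉ U} := by
    refine (Finset.card_le_card fun x hx => ?_).trans (Finset.card_union_le _ _)
    by_cases hxU : x ∈ U <;> simp_all
  have hAB' : (500 : ℤ) ≤ #{x ∈ N | σ u * σ x = 1} - #{x ∈ N | ¬ σ u * σ x = 1} := by
    exact_mod_cast hAB
  omega

lemma one_le_mul_sum_of_mem_coreSet (hσ : ∀ x, σ x = 1 ∨ σ x = -1) (hD : 1000000 ≤ dp)
    (hgap : 1 * √(dp * Real.log dp) ≤ dp - dm) {u : V} (hu : u ∈ coreSet G σ dp dm 1)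
    {f : V → ℤ} (hf : ∀ x, f x ∈ Set.Icc (-1) 1) (hfK : ∀ x ∈ coreSet G σ dp dm 1, f x = σ x)
    {F : Finset V} (hFN : F ⊆ G.neighborFinset u) (hNF : #(G.neighborFinset u) ≤ #F + 1) :
    1 ≤ σ u * ∑ x ∈ F, f x := by
  obtain ⟨U, hU, huU⟩ := Set.mem_sUnion.mp hu
  have hsurplus := hU.card_neighborFinset_add_three_le huU hσ hD hgap
  set N := G.neighborFinset u
  set A := {x ∈ N | σ u * σ x = 1 ∧ x ∈ U}
  have hAF : #A ≤ #{x ∈ F | x ∈ A} + 1 := by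
    have hsdiff : #(N \ F) ≤ 1 := by rw [Finset.card_sdiff_of_subset hFN]; omega
    have hsub : A ⊆ {x ∈ F | x ∈ A} ∪ (N \ F) := fun x hx => by
      by_cases hxF : x ∈ F
      · exact Finset.mem_union_left _ (Finset.mem_filter.mpr ⟨hxF, hx⟩)
      · exact Finset.mem_union_right _ (Finset.mem_sdiff.mpr ⟨(Finset.mem_filter.mp hx).1, hxF⟩)
    have := (Finset.card_le_card hsub).trans (Finset.card_union_le _ _)
    omega
  have hin : ∑ x ∈ F with x ∈ A, σ u * f x = #{x ∈ F | x ∈ A} := by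
    rw [Finset.card_eq_sum_ones, Nat.cast_sum, Nat.cast_one]
    refine Finset.sum_congr rfl fun x hx => ?_
    obtain ⟨-, hx⟩ := Finset.mem_filter.mp hx
    simp only [A, Finset.mem_filter] at hx
    rw [hfK x (Set.subset_sUnion_of_mem hU hx.2.2), hx.2.1]
  have hout : -(#{x ∈ F | x ∉ A} : ℤ) ≤ ∑ x ∈ F with x ∉ A, σ u * f x := by
    simpa using Finset.card_nsmul_le_sum _ (fun x => σ u * f x) (-1) fun x _ => by
      rcases hσ u with h | h <;> rw [h] <;> simp [-Set.mem_Icc] <;> linarith [(hf x).1, (hf x).2]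
  have hpart := Finset.card_filter_add_card_filter_not (s := F) (· ∈ A)
  rw [Finset.mul_sum, ← Finset.sum_filter_add_sum_filter_not F (· ∈ A), hin]
  have hFN' := Finset.card_le_card hFN
  omega

lemma wpMsg_mem_Icc (hσ : ∀ x, σ x = 1 ∨ σ x = -1) (t : ℕ) (a b : V) :
    wpMsg G Set.univ σ t a b ∈ Set.Icc (-1) 1 := by
  cases t with
  | zero => rcases hσ a with h | h <;> simp [wpMsg, h]
  | succ t => exact psiZ_mem_Icc _

lemma wpMsg_eq_of_mem_coreSet (hσ : ∀ x, σ x = 1 ∨ σ x = -1) (hD : 1000000 ≤ dp)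
    (hgap : 1 * √(dp * Real.log dp) ≤ dp - dm) (t : ℕ) {u : V}
    (hu : u ∈ coreSet G σ dp dm 1) (w : V) : wpMsg G Set.univ σ t u w = σ u := by
  induction t generalizing u w with
  | zero => simp [wpMsg]
  | succ t ih =>
    have hsum := one_le_mul_sum_of_mem_coreSet hσ hD hgap hu (wpMsg_mem_Icc hσ t · u)
      (fun x hx => ih hx u) (Finset.erase_subset w _) (by
        have := Finset.pred_card_le_card_erase (a := w) (s := G.neighborFinset u)
        omega)
    rw [wpMsg]
    rcases hσ u with h | h <;> rw [h] at hsum ⊢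
    · exact psiZ_eq_one (by linarith)
    · exact psiZ_eq_neg_one (by linarith)

end Core

section RootedTree

open SimpleGraph

variable {V : Type*} {G : SimpleGraph V} {K : Set V} {v w x y : V}

lemma mem_CvSet_self : v ∈ CvSet G K v :=
  Set.mem_iUnion.mpr ⟨0, Or.inl rfl⟩

lemma GvG_adj_of_adj_self (h : G.Adj v x) : (GvG G K v).Adj v x :=
  ⟨h, mem_CvSet_self, Set.mem_iUnion.mpr ⟨0, Or.inr h⟩⟩

lemma GvG_adj_of_adj (hw : w ∈ CvSet G K v) (hwK : w ∉ K) (h : G.Adj w x) :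
    (GvG G K v).Adj w x := by
  obtain ⟨t, ht⟩ := Set.mem_iUnion.mp hw
  exact ⟨h, hw, Set.mem_iUnion.mpr ⟨t + 1, Or.inr (Set.mem_biUnion ⟨ht, hwK⟩ h)⟩⟩

lemma reachable_GvG (htree : (G.induce (CvSet G K v)).IsTree) {a b : V}
    (ha : a ∈ CvSet G K v) (hb : b ∈ CvSet G K v) : (GvG G K v).Reachable a b :=
  htree.reachable_restrictG ha hb

lemma isAcyclic_GvG (htree : (G.induce (CvSet G K v)).IsTree) : (GvG G K v).IsAcyclic :=
  htree.isAcyclic_restrictG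

lemma exists_geodesic (htree : (G.induce (CvSet G K v)).IsTree) (hx : x ∈ CvSet G K v) :
    ∃ P : (GvG G K v).Walk x v, P.IsPath ∧ P.length = (GvG G K v).dist x v :=
  (reachable_GvG htree hx mem_CvSet_self).exists_path_of_dist

lemma parentOf_spec (htree : (G.induce (CvSet G K v)).IsTree) (hw : w ∈ CvSet G K v)
    (hwv : w ≠ v) : (GvG G K v).Adj w (parentOf G K v w) ∧
      (GvG G K v).dist (parentOf G K v w) v + 1 = (GvG G K v).dist w v := by
  refine Classical.epsilon_spec (p := fun x => (GvG G K v).Adj w x ∧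
    (GvG G K v).dist x v + 1 = (GvG G K v).dist w v) ?_
  obtain ⟨P, -, hPlen⟩ := exists_geodesic htree hw
  cases P with
  | nil => exact absurd rfl hwv
  | cons h q =>
    obtain ⟨Q, -, hQlen⟩ := exists_geodesic htree h.2.2
    have h₁ := dist_le q
    have h₂ := dist_le (Walk.cons h Q)
    simp only [Walk.length_cons] at hPlen h₂
    exact ⟨_, h, by omega⟩

lemma dist_ne_of_adj_GvG (htree : (G.induce (CvSet G K v)).IsTree) {a b : V}
    (hab : (GvG G K v).Adj a b) : (GvG G K v).dist a v ≠ (GvG G K v).dist b v := by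
  intro heq
  obtain ⟨Pa, hPa, hPalen⟩ := exists_geodesic htree hab.2.1
  obtain ⟨Pb, hPb, hPblen⟩ := exists_geodesic htree hab.2.2
  have := congrArg (fun P : (GvG G K v).Path a v => P.1.length)
    (((isAcyclic_GvG htree).subsingleton_path a v).elim
      ⟨_, isPath_cons_of_dist_le hab heq.ge hPb hPblen⟩ ⟨Pa, hPa⟩)
  simp only [Walk.length_cons] at this
  omega

lemma eq_parentOf (htree : (G.induce (CvSet G K v)).IsTree) (hw : w ∈ CvSet G K v)
    (hwv : w ≠ v) (hx : (GvG G K v).Adj w x)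
    (hd : (GvG G K v).dist x v + 1 = (GvG G K v).dist w v) : x = parentOf G K v w := by
  obtain ⟨hp, hpd⟩ := parentOf_spec htree hw hwv
  obtain ⟨Px, hPx, hPxlen⟩ := exists_geodesic htree hx.2.2
  obtain ⟨Pp, hPp, hPplen⟩ := exists_geodesic htree hp.2.2
  have := congrArg (fun P : (GvG G K v).Path w v => P.1.snd)
    (((isAcyclic_GvG htree).subsingleton_path w v).elim
      ⟨_, isPath_cons_of_dist_le hx (by omega) hPx hPxlen⟩
      ⟨_, isPath_cons_of_dist_le hp (by omega) hPp hPplen⟩)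
  simpa using this

def IsChildOf (G : SimpleGraph V) (K : Set V) (v w x : V) : Prop :=
  x ∈ CvSet G K v ∧ x ≠ v ∧ parentOf G K v x = w

lemma IsChildOf.adj (htree : (G.induce (CvSet G K v)).IsTree) (hx : IsChildOf G K v w x) :
    (GvG G K v).Adj w x := by
  have := (parentOf_spec htree hx.1 hx.2.1).1.symm
  rwa [hx.2.2] at this

lemma IsChildOf.dist_eq (htree : (G.induce (CvSet G K v)).IsTree) (hx : IsChildOf G K v w x) :
    (GvG G K v).dist w v + 1 = (GvG G K v).dist x v := by
  have := (parentOf_spec htree hx.1 hx.2.1).2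
  rwa [hx.2.2] at this

lemma isChildOf_of_adj (htree : (G.induce (CvSet G K v)).IsTree) (hw : w ∈ CvSet G K v)
    (hx : (GvG G K v).Adj w x) (hxp : w ≠ v → x ≠ parentOf G K v w) : IsChildOf G K v w x := by
  have hne := dist_ne_of_adj_GvG htree hx
  have hdiff := hx.diff_dist_adj (u := v)
  rw [dist_comm, dist_comm (u := v)] at hdiff
  have hv : (GvG G K v).dist v v = 0 := dist_self
  rcases hdiff with h | h | h
  · exact absurd h.symm hne
  · have hxv : x ≠ v := by rintro rfl; omega
    exact ⟨hx.2.2, hxv, (eq_parentOf htree hx.2.2 hxv hx.symm h.symm).symm⟩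
  · have hwv : w ≠ v := by rintro rfl; omega
    exact absurd (eq_parentOf htree hw hwv hx (by omega)) (hxp hwv)

end RootedTree

section Branches

open SimpleGraph

variable {V : Type*} {G : SimpleGraph V} {K : Set V} {v w x y : V}

lemma GdelG_adj_iff {a b : V} : (GdelG G K v x).Adj a b ↔
    (GvG G K v).Adj a b ∧ s(a, b) ≠ s(x, parentOf G K v x) := by
  simp [GdelG]

lemma GdelG_le : GdelG G K v x ≤ GvG G K v := deleteEdges_le _

lemma mem_Cdir_self : x ∈ Cdir G K v x := Reachable.refl x

lemma mem_Cdir_of_adj {a b : V} (hab : (GdelG G K v x).Adj a b) (ha : a ∈ Cdir G K v x) :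
    b ∈ Cdir G K v x :=
  ha.trans hab.reachable

lemma Cdir_subset_CvSet (hx : x ∈ CvSet G K v) : Cdir G K v x ⊆ CvSet G K v :=
  fun _ ⟨q⟩ => mem_of_restrictG_walk (q.mapLe GdelG_le) hx

lemma parentOf_not_mem_Cdir (htree : (G.induce (CvSet G K v)).IsTree) (hx : x ∈ CvSet G K v)
    (hxv : x ≠ v) : parentOf G K v x ∉ Cdir G K v x :=
  isBridge_iff.mp
    (isAcyclic_iff_forall_adj_isBridge.mp (isAcyclic_GvG htree) (parentOf_spec htree hx hxv).1)

lemma IsChildOf.not_mem_Cdir (htree : (G.induce (CvSet G K v)).IsTree)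
    (hx : IsChildOf G K v w x) : w ∉ Cdir G K v x :=
  hx.2.2 ▸ parentOf_not_mem_Cdir htree hx.1 hx.2.1

lemma parentOf_not_mem_support (htree : (G.induce (CvSet G K v)).IsTree)
    (hx : x ∈ CvSet G K v) (hxv : x ≠ v) (q : (GdelG G K v x).Walk x y) :
    parentOf G K v x ∉ (q.mapLe GdelG_le).support := by
  rw [Walk.support_mapLe_eq_support]
  exact fun h => parentOf_not_mem_Cdir htree hx hxv ⟨q.takeUntil _ h⟩

lemma IsChildOf.not_mem_support (htree : (G.induce (CvSet G K v)).IsTree)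
    (hx : IsChildOf G K v w x) (q : (GdelG G K v x).Walk x y) :
    w ∉ (q.mapLe GdelG_le).support :=
  hx.2.2 ▸ parentOf_not_mem_support htree hx.1 hx.2.1 q

lemma IsChildOf.ne_parentOf (htree : (G.induce (CvSet G K v)).IsTree)
    (hx : IsChildOf G K v w x) (hwv : w ≠ v) : x ≠ parentOf G K v w := by
  rintro rfl
  have := hx.dist_eq htree
  have := (parentOf_spec htree (hx.adj htree).2.1 hwv).2
  omega

lemma IsChildOf.GdelG_adj (htree : (G.induce (CvSet G K v)).IsTree)
    (hx : IsChildOf G K v w x) (hwv : w ≠ v) : (GdelG G K v w).Adj w x :=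
  GdelG_adj_iff.mpr ⟨hx.adj htree, fun h => hx.ne_parentOf htree hwv (Sym2.congr_right.mp h)⟩

lemma IsChildOf.Gdir_adj {a b : V} (hx : IsChildOf G K v w x) (hab : (GvG G K v).Adj a b)
    (ha : a ∈ Cdir G K v x) (haw : a ≠ w) (hbw : b ≠ w) : (Gdir G K v x).Adj a b := by
  have h : (GdelG G K v x).Adj a b := GdelG_adj_iff.mpr ⟨hab, by
    rw [hx.2.2, Ne, Sym2.eq_iff]
    tauto⟩
  exact ⟨h, ha, mem_Cdir_of_adj h ha⟩

lemma exists_GdelG_walk {a b : V} (q : (GvG G K v).Walk a b)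
    (h : x ∉ q.support ∨ parentOf G K v x ∉ q.support) :
    ∃ q' : (GdelG G K v x).Walk a b, q'.length = q.length := by
  have hedges : ∀ e ∈ q.edges, e ∈ (GdelG G K v x).edgeSet := by
    intro e he
    rw [GdelG, edgeSet_deleteEdges, Set.mem_sdiff, Set.mem_singleton_iff]
    refine ⟨q.edges_subset_edgeSet he, ?_⟩
    rintro rfl
    rcases h with h | h
    exacts [h (q.fst_mem_support_of_mem_edges he), h (q.snd_mem_support_of_mem_edges he)]
  exact ⟨q.transfer _ hedges, q.length_transfer hedges⟩

lemma IsChildOf.eq_of_mem_Cdir (htree : (G.induce (CvSet G K v)).IsTree) {x' : V}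
    (hx : IsChildOf G K v w x) (hx' : IsChildOf G K v w x') (hy : y ∈ Cdir G K v x)
    (hy' : y ∈ Cdir G K v x') : x = x' := by
  obtain ⟨q⟩ := hy
  obtain ⟨q'⟩ := hy'
  have hpath : ∀ {z : V} (hz : IsChildOf G K v w z) (p : (GdelG G K v z).Walk z y),
      (Walk.cons (hz.adj htree) (p.bypass.mapLe GdelG_le)).IsPath := fun hz p =>
    (Walk.cons_isPath_iff _ _).mpr ⟨p.bypass_isPath.mapLe _, hz.not_mem_support htree p.bypass⟩
  have := congrArg (fun P : (GvG G K v).Path w y => P.1.snd)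
    (((isAcyclic_GvG htree).subsingleton_path w y).elim ⟨_, hpath hx q⟩ ⟨_, hpath hx' q'⟩)
  simpa using this

lemma IsChildOf.Cdir_subset (htree : (G.induce (CvSet G K v)).IsTree)
    (hx : IsChildOf G K v w x) (hwv : w ≠ v) : Cdir G K v x ⊆ Cdir G K v w := by
  rintro y ⟨q⟩
  obtain ⟨q', -⟩ := exists_GdelG_walk (x := w) (q.mapLe GdelG_le)
    (Or.inl (hx.not_mem_support htree q))
  exact ⟨Walk.cons (hx.GdelG_adj htree hwv) q'⟩

lemma exists_isChildOf_walk (htree : (G.induce (CvSet G K v)).IsTree) (hw : w ∈ CvSet G K v)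
    (R : (GvG G K v).Walk w y) (hR : R.IsPath) (hyw : y ≠ w)
    (havoid : w ≠ v → parentOf G K v w ∉ R.support) :
    ∃ x, IsChildOf G K v w x ∧ ∃ q : (GdelG G K v x).Walk x y, q.length + 1 = R.length := by
  cases R with
  | nil => exact absurd rfl hyw
  | cons h q =>
    rw [Walk.cons_isPath_iff] at hR
    have hx := isChildOf_of_adj htree hw h fun hwv hxp => havoid hwv (by simp [← hxp])
    obtain ⟨q', hq'⟩ := exists_GdelG_walk q (Or.inr (hx.2.2 ▸ hR.2))
    exact ⟨_, hx, q', by simp [hq']⟩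

lemma exists_isChildOf_mem_Cdir (htree : (G.induce (CvSet G K v)).IsTree)
    (hw : w ∈ CvSet G K v) (hwv : w ≠ v) (hy : y ∈ Cdir G K v w) (hyw : y ≠ w) :
    ∃ x, IsChildOf G K v w x ∧ y ∈ Cdir G K v x := by
  obtain ⟨q⟩ := hy
  obtain ⟨x, hx, q', -⟩ := exists_isChildOf_walk htree hw (q.bypass.mapLe GdelG_le)
    (q.bypass_isPath.mapLe _) hyw fun _ => parentOf_not_mem_support htree hw hwv q.bypass
  exact ⟨x, hx, ⟨q'⟩⟩

lemma exists_isChildOf_self_mem_Cdir (htree : (G.induce (CvSet G K v)).IsTree)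
    (hy : y ∈ CvSet G K v) (hyv : y ≠ v) : ∃ x, IsChildOf G K v v x ∧ y ∈ Cdir G K v x := by
  obtain ⟨R, hR, -⟩ := (reachable_GvG htree mem_CvSet_self hy).exists_path_of_dist
  obtain ⟨x, hx, q, -⟩ := exists_isChildOf_walk htree mem_CvSet_self R hR hyv (absurd rfl)
  exact ⟨x, hx, ⟨q⟩⟩

lemma IsChildOf.dist_lt_length (htree : (G.induce (CvSet G K v)).IsTree)
    (hw : w ∈ CvSet G K v) (hx : IsChildOf G K v w x) (R : (GvG G K v).Walk w y)
    (hR : R.IsPath) (havoid : w ≠ v → parentOf G K v w ∉ R.support) (hy : y ∈ Cdir G K v x) :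
    (GdelG G K v x).dist x y < R.length := by
  have hyw : y ≠ w := fun h => hx.not_mem_Cdir htree (h ▸ hy)
  obtain ⟨x', hx', q, hq⟩ := exists_isChildOf_walk htree hw R hR hyw havoid
  obtain rfl := hx'.eq_of_mem_Cdir htree hx ⟨q⟩ hy
  have := dist_le q
  omega

end Branches

section Heights

open SimpleGraph

variable {V : Type*} {G : SimpleGraph V} {K : Set V} {v w x y : V}

lemma exists_dist_eq_hdir (hfin : (CvSet G K v).Finite) (hx : x ∈ CvSet G K v) :
    ∃ y ∈ Cdir G K v x, (GdelG G K v x).dist x y = hdir G K v x := by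
  have hne : ((GdelG G K v x).dist x '' Cdir G K v x).Nonempty :=
    ⟨0, x, mem_Cdir_self, dist_self⟩
  exact Nat.sSup_mem hne ((hfin.subset (Cdir_subset_CvSet hx)).image _).bddAbove

lemma dist_le_hdir (hfin : (CvSet G K v).Finite) (hx : x ∈ CvSet G K v)
    (hy : y ∈ Cdir G K v x) : (GdelG G K v x).dist x y ≤ hdir G K v x :=
  le_csSup ((hfin.subset (Cdir_subset_CvSet hx)).image _).bddAbove ⟨y, hy, rfl⟩

lemma dist_le_hvG (hfin : (CvSet G K v).Finite) (hy : (GvG G K v).Reachable v y) :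
    (GvG G K v).dist v y ≤ hvG G K v :=
  le_csSup ((hfin.subset fun _ hu => hu.elim fun p => mem_of_restrictG_walk p mem_CvSet_self).image
    _).bddAbove ⟨y, hy, rfl⟩

lemma IsChildOf.hdir_lt_hdir (htree : (G.induce (CvSet G K v)).IsTree)
    (hfin : (CvSet G K v).Finite) (hx : IsChildOf G K v w x) (hwv : w ≠ v) :
    hdir G K v x < hdir G K v w := by
  have hw := (hx.adj htree).2.1
  obtain ⟨y, hy, hyd⟩ := exists_dist_eq_hdir hfin hx.1
  have hyw := hx.Cdir_subset htree hwv hy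
  obtain ⟨R, hR, hRlen⟩ := Reachable.exists_path_of_dist hyw
  have hlt := hx.dist_lt_length htree hw (R.mapLe GdelG_le) (hR.mapLe _)
    (fun _ => parentOf_not_mem_support htree hw hwv R) hy
  have hle := dist_le_hdir hfin hw hyw
  rw [Walk.length_mapLe] at hlt
  omega

lemma IsChildOf.hdir_lt_hvG (htree : (G.induce (CvSet G K v)).IsTree)
    (hfin : (CvSet G K v).Finite) (hx : IsChildOf G K v v x) : hdir G K v x < hvG G K v := by
  obtain ⟨y, hy, hyd⟩ := exists_dist_eq_hdir hfin hx.1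
  obtain ⟨R, hR, hRlen⟩ :=
    (reachable_GvG htree mem_CvSet_self (Cdir_subset_CvSet hx.1 hy)).exists_path_of_dist
  have hlt := hx.dist_lt_length htree mem_CvSet_self R hR (absurd rfl) hy
  have hle := dist_le_hvG hfin ⟨R⟩
  omega

end Heights

section TreeSplit

open SimpleGraph

variable {V : Type*} {G : SimpleGraph V} {K : Set V} {v w x : V}

lemma Gdir_eq_finsetSup (htree : (G.induce (CvSet G K v)).IsTree) (hw : w ∈ CvSet G K v)
    (hwv : w ≠ v) {X : Finset V} (hX : ∀ x, x ∈ X ↔ IsChildOf G K v w x) :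
    Gdir G K v w = X.sup fun x => edge w x ⊔ Gdir G K v x := by
  ext a b
  simp only [finsetSup_adj, sup_adj, edge_adj, hX]
  constructor
  · rintro ⟨hab, ha, hb⟩
    obtain ⟨hab, hne⟩ := GdelG_adj_iff.mp hab
    by_cases haw : a = w
    · subst a
      exact ⟨b, isChildOf_of_adj htree hw hab fun _ h => hne (by rw [h]),
        Or.inl ⟨Or.inl ⟨rfl, rfl⟩, hab.ne⟩⟩
    by_cases hbw : b = w
    · subst b
      exact ⟨a, isChildOf_of_adj htree hw hab.symm fun _ h => hne (by rw [h, Sym2.eq_swap]),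
        Or.inl ⟨Or.inr ⟨rfl, rfl⟩, hab.ne⟩⟩
    obtain ⟨x, hx, hax⟩ := exists_isChildOf_mem_Cdir htree hw hwv ha haw
    exact ⟨x, hx, Or.inr (hx.Gdir_adj hab hax haw hbw)⟩
  · rintro ⟨x, hx, ⟨hedge, hab⟩ | ⟨hab, ha, hb⟩⟩
    · have hwx := hx.GdelG_adj htree hwv
      have hxC := mem_Cdir_of_adj hwx mem_Cdir_self
      rcases hedge with ⟨rfl, rfl⟩ | ⟨rfl, rfl⟩
      exacts [⟨hwx, mem_Cdir_self, hxC⟩, ⟨hwx.symm, hxC, mem_Cdir_self⟩]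
    · have haw : a ≠ w := fun h => hx.not_mem_Cdir htree (h ▸ ha)
      have hbw : b ≠ w := fun h => hx.not_mem_Cdir htree (h ▸ hb)
      refine ⟨GdelG_adj_iff.mpr ⟨GdelG_le hab, fun h => ?_⟩,
        hx.Cdir_subset htree hwv ha, hx.Cdir_subset htree hwv hb⟩
      rcases Sym2.eq_iff.mp h with ⟨h, -⟩ | ⟨-, h⟩
      exacts [haw h, hbw h]

lemma GvG_eq_finsetSup (htree : (G.induce (CvSet G K v)).IsTree) {X : Finset V}
    (hX : ∀ x, x ∈ X ↔ IsChildOf G K v v x) :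
    GvG G K v = X.sup fun x => edge v x ⊔ Gdir G K v x := by
  ext a b
  simp only [finsetSup_adj, sup_adj, edge_adj, hX]
  constructor
  · intro hab
    by_cases hav : a = v
    · subst a
      exact ⟨b, isChildOf_of_adj htree mem_CvSet_self hab (absurd rfl),
        Or.inl ⟨Or.inl ⟨rfl, rfl⟩, hab.ne⟩⟩
    by_cases hbv : b = v
    · subst b
      exact ⟨a, isChildOf_of_adj htree mem_CvSet_self hab.symm (absurd rfl),
        Or.inl ⟨Or.inr ⟨rfl, rfl⟩, hab.ne⟩⟩
    obtain ⟨x, hx, hax⟩ := exists_isChildOf_self_mem_Cdir htree hab.2.1 hav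
    exact ⟨x, hx, Or.inr (hx.Gdir_adj hab hax hav hbv)⟩
  · rintro ⟨x, hx, ⟨⟨rfl, rfl⟩ | ⟨rfl, rfl⟩, -⟩ | hab⟩
    exacts [hx.adj htree, (hx.adj htree).symm, GdelG_le hab.1]

lemma isStarSplit_of_isChildOf (htree : (G.induce (CvSet G K v)).IsTree) {H : SimpleGraph V}
    {C : Set V} {X : Finset V} (hX : ∀ x, x ∈ X ↔ IsChildOf G K v w x)
    (hH : H = X.sup fun x => edge w x ⊔ Gdir G K v x)
    (hC : ∀ a, a ∈ C ↔ a = w ∨ ∃ x, IsChildOf G K v w x ∧ a ∈ Cdir G K v x) :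
    IsStarSplit H C w X (Gdir G K v) (Cdir G K v) where
  eq_sup := hH
  mem_iff a := by simp only [hC, hX]
  self_mem _ _ := mem_Cdir_self
  center_not_mem x hx := ((hX x).mp hx).not_mem_Cdir htree
  disjoint x hx x' hx' hne a ha ha' :=
    hne (((hX x).mp hx).eq_of_mem_Cdir htree ((hX x').mp hx') ha ha')
  adj_mem _ _ _ _ h := h.2

variable [∀ w : V, Fintype (G.neighborSet w)]

lemma mem_erase_neighborFinset_iff (htree : (G.induce (CvSet G K v)).IsTree)
    (hw : w ∈ CvSet G K v) (hwv : w ≠ v) (hwK : w ∉ K) :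
    x ∈ (G.neighborFinset w).erase (parentOf G K v w) ↔ IsChildOf G K v w x := by
  rw [Finset.mem_erase, mem_neighborFinset]
  exact ⟨fun ⟨hxp, hx⟩ => isChildOf_of_adj htree hw (GvG_adj_of_adj hw hwK hx) fun _ => hxp,
    fun hx => ⟨hx.ne_parentOf htree hwv, (hx.adj htree).1⟩⟩

lemma mem_neighborFinset_iff_isChildOf (htree : (G.induce (CvSet G K v)).IsTree) :
    x ∈ G.neighborFinset v ↔ IsChildOf G K v v x := by
  rw [mem_neighborFinset]
  exact ⟨fun hx => isChildOf_of_adj htree mem_CvSet_self (GvG_adj_of_adj_self hx) (absurd rfl),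
    fun hx => (hx.adj htree).1⟩

lemma isStarSplit_Gdir (htree : (G.induce (CvSet G K v)).IsTree) (hw : w ∈ CvSet G K v)
    (hwv : w ≠ v) (hwK : w ∉ K) :
    IsStarSplit (Gdir G K v w) (Cdir G K v w) w ((G.neighborFinset w).erase (parentOf G K v w))
      (Gdir G K v) (Cdir G K v) := by
  have hX := fun x => mem_erase_neighborFinset_iff (x := x) htree hw hwv hwK
  refine isStarSplit_of_isChildOf htree hX (Gdir_eq_finsetSup htree hw hwv hX) fun a => ?_
  by_cases haw : a = w
  · simp only [haw, mem_Cdir_self, true_or]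
  · refine ⟨fun ha => Or.inr (exists_isChildOf_mem_Cdir htree hw hwv ha haw), ?_⟩
    rintro (h | ⟨x, hx, hax⟩)
    exacts [absurd h haw, hx.Cdir_subset htree hwv hax]

lemma isStarSplit_GvG (htree : (G.induce (CvSet G K v)).IsTree) :
    IsStarSplit (GvG G K v) (CvSet G K v) v (G.neighborFinset v) (Gdir G K v) (Cdir G K v) := by
  have hX := fun x => mem_neighborFinset_iff_isChildOf (x := x) htree
  refine isStarSplit_of_isChildOf htree hX (GvG_eq_finsetSup htree hX) fun a => ?_
  by_cases hav : a = v
  · simp only [hav, mem_CvSet_self, true_or]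
  · refine ⟨fun ha => Or.inr (exists_isChildOf_self_mem_Cdir htree ha hav), ?_⟩
    rintro (h | ⟨x, hx, hax⟩)
    exacts [absurd h hav, Cdir_subset_CvSet hx.1 hax]

end TreeSplit

section WarningPropagation

open SimpleGraph

variable {V : Type*} {G : SimpleGraph V} [∀ w : V, Fintype (G.neighborSet w)] {σ : V → ℤ}
  {K : Set V} {v : V}

lemma wpMsg_eq_psiZ_cutBias (htree : (G.induce (CvSet G K v)).IsTree)
    (hfin : (CvSet G K v).Finite) (hσ : ∀ x, σ x = 1 ∨ σ x = -1)
    (hK : ∀ t u w, u ∈ K → wpMsg G Set.univ σ t u w = σ u) (t : ℕ) {w : V}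
    (hw : w ∈ CvSet G K v) (hwv : w ≠ v) (hwK : w ∉ K) (ht : hdir G K v w + 1 ≤ t) :
    wpMsg G Set.univ σ t w (parentOf G K v w)
      = psiZ (cutBias (Gdir G K v w) (Cdir G K v w) K σ w) := by
  induction t generalizing w with
  | zero => omega
  | succ t ih =>
    have hS := isStarSplit_Gdir htree hw hwv hwK
    rw [wpMsg, hS.cutBias_eq_sum (hfin.subset (Cdir_subset_CvSet hw)) hσ]
    refine congrArg psiZ (Finset.sum_congr rfl fun x hx => ?_)
    have hx' := (mem_erase_neighborFinset_iff htree hw hwv hwK).mp hx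
    split_ifs with hxK
    · exact hK t x w hxK
    · have := ih hx'.1 hx'.2.1 hxK (by have := hx'.hdir_lt_hdir htree hfin hwv; omega)
      rwa [hx'.2.2] at this

lemma wpVal_eq_cutBias (htree : (G.induce (CvSet G K v)).IsTree)
    (hfin : (CvSet G K v).Finite) (hσ : ∀ x, σ x = 1 ∨ σ x = -1)
    (hK : ∀ t u w, u ∈ K → wpMsg G Set.univ σ t u w = σ u) {t : ℕ} (ht : hvG G K v + 1 ≤ t) :
    wpVal G Set.univ σ t v = cutBias (GvG G K v) (CvSet G K v) K σ v := by
  rw [wpVal, (isStarSplit_GvG htree).cutBias_eq_sum hfin hσ]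
  refine Finset.sum_congr rfl fun x hx => ?_
  have hx' := (mem_neighborFinset_iff_isChildOf htree).mp hx
  split_ifs with hxK
  · exact hK t x v hxK
  · have := wpMsg_eq_psiZ_cutBias htree hfin hσ hK t hx'.1 hx'.2.1 hxK
      (by have := hx'.hdir_lt_hvG htree hfin; omega)
    rwa [hx'.2.2] at this

end WarningPropagation

/-- Lemma 3.3 (2): if `μ*_{u→v} = 0` then
`cut(G_{u→v}, σ^{+1}_{u→v}) = cut(G_{u→v}, σ^{-1}_{u→v})`, and if `μ*_v = 0` then
`cut(G_v, σ^{+1}_v) = cut(G_v, σ^{-1}_v)`. -/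
theorem cut_indifference :
    ∃ c : ℝ, 0 < c ∧ ∃ D : ℝ, ∀ dp dm : ℝ,
    0 < dm → dm < dp → D ≤ dp → c * Real.sqrt (dp * Real.log dp) ≤ dp - dm →
    ∀ (V : Type*) (G : SimpleGraph V) [∀ v : V, Fintype (G.neighborSet v)] (σ : V → ℤ),
    (∀ x : V, σ x = 1 ∨ σ x = -1) →
    ∀ K : Set V, K = coreSet G σ dp dm c →
    ∀ v : V, (CvSet G K v).Finite → (G.induce (CvSet G K v)).IsTree →
    (∀ u ∈ CvSet G K v, u ≠ v → 1 ≤ hdir G K v u → muStarDir G K σ v u = 0 →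
        cutW (Gdir G K v u) (Cdir G K v u ∩ ({u} ∪ K)) (fun x => if x = u then 1 else σ x)
          = cutW (Gdir G K v u) (Cdir G K v u ∩ ({u} ∪ K))
              (fun x => if x = u then -1 else σ x)) ∧
    (muStarV G K σ v = 0 →
        cutW (GvG G K v) (CvSet G K v ∩ ({v} ∪ K)) (fun x => if x = v then 1 else σ x)
          = cutW (GvG G K v) (CvSet G K v ∩ ({v} ∪ K))
              (fun x => if x = v then -1 else σ x)) := by
  refine ⟨1, one_pos, 1000000, fun dp dm _ _ hD hgap V G _ σ hσ K hK v hfin htree => ?_⟩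
  have hcore : ∀ t u w, u ∈ K → wpMsg G Set.univ σ t u w = σ u :=
    fun t u w hu => wpMsg_eq_of_mem_coreSet hσ hD hgap t (hK ▸ hu) w
  refine ⟨fun u hu huv _ hμ => ?_, fun hμ => ?_⟩
  · by_cases huK : u ∈ K
    · rw [muStarDir, hcore _ _ _ huK] at hμ
      rcases hσ u with h | h <;> omega
    · rw [muStarDir, wpMsg_eq_psiZ_cutBias htree hfin hσ hcore _ hu huv huK le_rfl,
        psiZ_eq_zero] at hμ
      exact rootedCut_eq_of_cutBias_eq_zero hμ
  · rw [muStarV, wpVal_eq_cutBias htree hfin hσ hcore le_rfl] at hμ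
    exact rootedCut_eq_of_cutBias_eq_zero hμ
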